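/- Let X ∈ ℝ^{n×d}, y ∈ ℝⁿ, β* ∈ ℝ^d with Xβ* = y, and L(β) = (1/(4n))·‖Xβ − y‖₂². Let Ψ : ℝ^d → ℝ be twice continuously differentiable and convex, and let β : [0,∞) → ℝ^d be continuous with β(0) = β₀ such that t ↦ ∇Ψ(β(t)) is differentiable with derivative −∇L(β(t)). Then for every t > 0, L(β(t)) ≤ D_Ψ(β*, β₀)/t. -/

import Mathlib

/-!
Write `r(t) = Xβ(t) - y` for the residual and `D(t) = D_Ψ(β*, β(t))`. Along the mirror flow
`d/dt ∇Ψ(β) = -∇L(β)` the divergence `D` is a Lyapunov function: `D' = ⟪∇L(β), β* - β⟫ = -2 L(β)`,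
because `L` is quadratic and vanishes at `β*`. Integrating the flow gives
`∇Ψ(β(s)) - ∇Ψ(β(u)) = -(1/2n) Xᵀ ∫ᵤˢ r`, so monotonicity of `∇Ψ` yields `⟪∫ᵤˢ r, r(s) - r(u)⟫ ≤ 0`,
which forces `‖r‖`, hence `L(β)`, to be nonincreasing. Therefore
`2t L(β(t)) ≤ 2 ∫₀ᵗ L(β) = D(0) - D(t) ≤ D(0)`.
-/

open Set Filter Topology Asymptotics MeasureTheory
open scoped RealInnerProductSpace Gradient InnerProduct

theorem antitoneOn_norm_of_inner_sub_nonpos {E : Type*} [NormedAddCommGroup E]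
    [InnerProductSpace ℝ E] {G g : ℝ → E} {a : ℝ} (hG : ∀ r, HasDerivAt G (g r) r)
    (hmono : ∀ u ∈ Ici a, ∀ s ∈ Ici a, u ≤ s → ⟪G s - G u, g s - g u⟫ ≤ 0) :
    AntitoneOn (fun r => ‖g r‖) (Ici a) := by
  -- the increments of `G` over a window of fixed length `h` shrink as the window moves right
  have hinc : ∀ h > 0, AntitoneOn (fun r => ‖h⁻¹ • (G (r + h) - G r)‖) (Ici a) := by
    intro h hh
    have hW : ∀ r, HasDerivAt (fun r => G (r + h) - G r) (g (r + h) - g r) r := fun r =>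
      ((hG (r + h)).comp_add_const r h).sub (hG r)
    have hsq : AntitoneOn (fun r => ‖G (r + h) - G r‖ ^ 2) (Ici a) := by
      refine antitoneOn_of_hasDerivWithinAt_nonpos (convex_Ici a)
        (fun r _ => ((hW r).norm_sq).continuousAt.continuousWithinAt)
        (fun r _ => ((hW r).norm_sq).hasDerivWithinAt) fun r hr => ?_
      rw [interior_Ici] at hr
      have har : a ≤ r := le_of_lt hr
      have := hmono r har (r + h) (by simp only [mem_Ici]; linarith) (by linarith)
      linarith
    intro u hu s hs hus
    simp only [norm_smul]
    exact mul_le_mul_of_nonneg_left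
      (pow_le_pow_iff_left₀ (norm_nonneg _) (norm_nonneg _) two_ne_zero |>.1 (hsq hu hs hus))
      (norm_nonneg _)
  intro u hu s hs hus
  have hslope : ∀ r, Tendsto (fun h => ‖h⁻¹ • (G (r + h) - G r)‖) (𝓝[>] 0) (𝓝 ‖g r‖) := fun r =>
    ((hasDerivAt_iff_tendsto_slope_zero.1 (hG r)).norm).mono_left
      (nhdsWithin_mono _ fun h hh => ne_of_gt hh)
  exact le_of_tendsto_of_tendsto (hslope s) (hslope u)
    (eventually_nhdsWithin_of_forall fun h hh => hinc h hh hu hs hus)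

theorem intervalIntegrable_mul_norm_residual_sq {E F : Type*} [NormedAddCommGroup E]
    [NormedSpace ℝ E] [NormedAddCommGroup F] [NormedSpace ℝ F] {A : E →L[ℝ] F} {y : F} {β : ℝ → E}
    (c : ℝ) (hβ : ContinuousOn β (Ici 0)) {t : ℝ}
    (ht : 0 ≤ t) : IntervalIntegrable (fun s => c * ‖A (β s) - y‖ ^ 2) volume 0 t :=
  (continuousOn_const.mul (((A.continuous.comp_continuousOn (hβ.mono Icc_subset_Ici_self)).sub
    continuousOn_const).norm.pow 2)).intervalIntegrable_of_Icc ht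

variable {E : Type*} [NormedAddCommGroup E] [InnerProductSpace ℝ E] [CompleteSpace E]

noncomputable def bregmanDiv (Ψ : E → ℝ) (b a : E) : ℝ := Ψ b - Ψ a - ⟪∇ Ψ a, b - a⟫

def IsMirrorFlow (Ψ : E → ℝ) (V : E → E) (β : ℝ → E) : Prop :=
  ∀ t ∈ Ici (0 : ℝ), HasDerivWithinAt (fun s => ∇ Ψ (β s)) (-V (β t)) (Ici 0) t

theorem ConvexOn.add_inner_gradient_le {Ψ : E → ℝ} {S : Set E} (hconv : ConvexOn ℝ S Ψ)
    {a b : E} (ha : a ∈ S) (hb : b ∈ S) (hΨ : DifferentiableAt ℝ Ψ a) :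
    Ψ a + ⟪∇ Ψ a, b - a⟫ ≤ Ψ b := by
  have hline : ConvexOn ℝ (Icc 0 1) (fun τ : ℝ => Ψ (AffineMap.lineMap a b τ)) :=
    (hconv.comp_affineMap (AffineMap.lineMap a b)).subset
      (fun τ hτ => hconv.1.lineMap_mem ha hb hτ) (convex_Icc 0 1)
  have hderiv : HasDerivAt (fun τ : ℝ => Ψ (AffineMap.lineMap a b τ)) ⟪∇ Ψ a, b - a⟫ 0 := by
    have hF : HasFDerivAt Ψ (fderiv ℝ Ψ a) (AffineMap.lineMap a b (0 : ℝ)) := by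
      simpa using hΨ.hasFDerivAt
    rw [inner_gradient_left]
    exact hF.comp_hasDerivAt (0 : ℝ) AffineMap.hasDerivAt_lineMap
  have := hline.le_slope_of_hasDerivAt (by simp) (by simp) one_pos hderiv
  simp only [slope_def_field, AffineMap.lineMap_apply_zero, AffineMap.lineMap_apply_one,
    sub_zero, div_one] at this
  linarith

theorem bregmanDiv_nonneg {Ψ : E → ℝ} {a : E} (hconv : ConvexOn ℝ univ Ψ)
    (hΨ : DifferentiableAt ℝ Ψ a) (b : E) : 0 ≤ bregmanDiv Ψ b a := by
  have := hconv.add_inner_gradient_le (mem_univ a) (mem_univ b) hΨ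
  unfold bregmanDiv
  linarith

theorem ConvexOn.inner_gradient_sub_nonneg {Ψ : E → ℝ} (hconv : ConvexOn ℝ univ Ψ)
    (hΨ : Differentiable ℝ Ψ) (a b : E) : 0 ≤ ⟪∇ Ψ b - ∇ Ψ a, b - a⟫ := by
  have hab := hconv.add_inner_gradient_le (mem_univ a) (mem_univ b) (hΨ a)
  have hba := hconv.add_inner_gradient_le (mem_univ b) (mem_univ a) (hΨ b)
  rw [← neg_sub b a, inner_neg_right] at hba
  rw [inner_sub_left]
  linarith

theorem ConvexOn.hasDerivWithinAt_bregmanDiv {Ψ : E → ℝ} (hconv : ConvexOn ℝ univ Ψ)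
    (hΨ : Differentiable ℝ Ψ) {β : ℝ → E} {s : Set ℝ} {t : ℝ} {z' : E}
    (hβ : ContinuousWithinAt β s t) (hz : HasDerivWithinAt (fun τ => ∇ Ψ (β τ)) z' s t) (b : E) :
    HasDerivWithinAt (fun τ => bregmanDiv Ψ b (β τ)) (-⟪z', b - β t⟫) s t := by
  set z := fun τ => ∇ Ψ (β τ)
  set D := fun τ => bregmanDiv Ψ b (β τ)
  have hlin : HasDerivWithinAt (fun τ => ⟪z t - z τ, b - β t⟫) (-⟪z', b - β t⟫) s t := by
    simpa using ((hasDerivWithinAt_const t s (z t)).sub hz).inner ℝ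
      (hasDerivWithinAt_const t s (b - β t))
  -- the two first-order convexity inequalities at `β τ` and `β t` squeeze the remainder
  have hsqueeze : ∀ τ, 0 ≤ D τ - D t - ⟪z t - z τ, b - β t⟫ ∧
      D τ - D t - ⟪z t - z τ, b - β t⟫ ≤ ⟪z τ - z t, β τ - β t⟫ := by
    intro τ
    have h₁ := hconv.add_inner_gradient_le (mem_univ (β t)) (mem_univ (β τ)) (hΨ (β t))
    have h₂ := hconv.add_inner_gradient_le (mem_univ (β τ)) (mem_univ (β t)) (hΨ (β τ))
    simp only [D, z, bregmanDiv, inner_sub_left, inner_sub_right] at h₁ h₂ ⊢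
    constructor <;> linarith
  have hrem : (fun τ => D τ - D t - ⟪z t - z τ, b - β t⟫) =o[𝓝[s] t] (fun τ => τ - t) := by
    have hprod : (fun τ => ‖z τ - z t‖ * ‖β τ - β t‖) =o[𝓝[s] t] (fun τ => (τ - t) * 1) :=
      hz.hasFDerivWithinAt.isBigO_sub.norm_left.mul_isLittleO
        ((isLittleO_one_iff ℝ).2 (tendsto_sub_nhds_zero_iff.2 hβ)).norm_left
    refine IsBigO.trans_isLittleO (isBigO_of_le _ fun τ => ?_) (by simpa using hprod)
    obtain ⟨h₀, h₁⟩ := hsqueeze τ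
    rw [Real.norm_of_nonneg h₀, Real.norm_of_nonneg (by positivity)]
    exact h₁.trans (real_inner_le_norm _ _)
  refine HasDerivWithinAt.of_isLittleO ((hlin.isLittleO.add hrem).congr_left fun τ => ?_)
  simp only [sub_self, inner_zero_left, smul_eq_mul, D]
  ring

section LeastSquares

variable {F : Type*} [NormedAddCommGroup F] [InnerProductSpace ℝ F] [CompleteSpace F]

theorem hasGradientAt_mul_norm_sub_sq (A : E →L[ℝ] F) (y : F) (c : ℝ) (x : E) :
    HasGradientAt (fun x => c * ‖A x - y‖ ^ 2) ((2 * c) • (A†) (A x - y)) x := by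
  rw [hasGradientAt_iff_hasFDerivAt]
  refine (((A.hasFDerivAt.sub_const y).norm_sq).const_mul c).congr_fderiv ?_
  ext v
  simp [ContinuousLinearMap.adjoint_inner_left]
  ring

variable {A : E →L[ℝ] F} {y : F} {c : ℝ} {Ψ : E → ℝ} {β : ℝ → E}

theorem hasDerivWithinAt_bregmanDiv_of_mirrorFlow (hconv : ConvexOn ℝ univ Ψ)
    (hΨ : Differentiable ℝ Ψ) (hβ : ContinuousOn β (Ici 0))
    (hflow : IsMirrorFlow Ψ (fun x => (2 * c) • (A†) (A x - y)) β)
    {b : E} (hb : A b = y) {t : ℝ} (ht : 0 ≤ t) :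
    HasDerivWithinAt (fun s => bregmanDiv Ψ b (β s)) (-(2 * c * ‖A (β t) - y‖ ^ 2)) (Ici 0) t := by
  convert hconv.hasDerivWithinAt_bregmanDiv hΨ (hβ t ht) (hflow t ht) b using 1
  rw [inner_neg_left, neg_neg, real_inner_smul_left, ContinuousLinearMap.adjoint_inner_left,
    map_sub, hb, ← neg_sub (A (β t)) y, inner_neg_right, real_inner_self_eq_norm_sq]
  ring

theorem integral_mul_norm_residual_sq_eq_of_mirrorFlow (hconv : ConvexOn ℝ univ Ψ)
    (hΨ : Differentiable ℝ Ψ) (hβ : ContinuousOn β (Ici 0))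
    (hflow : IsMirrorFlow Ψ (fun x => (2 * c) • (A†) (A x - y)) β)
    {b : E} (hb : A b = y) {t : ℝ} (ht : 0 ≤ t) :
    ∫ s in 0..t, 2 * c * ‖A (β s) - y‖ ^ 2 = bregmanDiv Ψ b (β 0) - bregmanDiv Ψ b (β t) := by
  have hD := fun s (hs : s ∈ Ici (0 : ℝ)) =>
    hasDerivWithinAt_bregmanDiv_of_mirrorFlow hconv hΨ hβ hflow hb hs
  have hIcc : Icc 0 t ⊆ Ici 0 := Icc_subset_Ici_self
  have hftc := intervalIntegral.integral_eq_sub_of_hasDeriv_right_of_le ht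
    (fun s hs => (hD s (hIcc hs)).continuousWithinAt.mono hIcc)
    (fun s hs => (hD s (le_of_lt hs.1)).mono (Ioi_subset_Ici_self.trans (Ici_subset_Ici.2 hs.1.le)))
    (intervalIntegrable_mul_norm_residual_sq _ hβ ht).neg
  rw [intervalIntegral.integral_neg] at hftc
  linarith

theorem antitoneOn_norm_residual_of_mirrorFlow (hc : 0 < c) (hconv : ConvexOn ℝ univ Ψ)
    (hΨ : Differentiable ℝ Ψ) (hβ : ContinuousOn β (Ici 0))
    (hflow : IsMirrorFlow Ψ (fun x => (2 * c) • (A†) (A x - y)) β) :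
    AntitoneOn (fun t => ‖A (β t) - y‖) (Ici 0) := by
  set g : ℝ → F := fun s => A (β (max s 0)) - y
  have hg : Continuous g := (A.continuous.comp
    (hβ.comp_continuous (continuous_id.max continuous_const) fun s => le_max_right s 0)).sub
    continuous_const
  have hgβ : ∀ s ∈ Ici (0 : ℝ), g s = A (β s) - y := fun s hs => by
    simp only [g, max_eq_left (mem_Ici.1 hs)]
  set G : ℝ → F := fun s => ∫ τ in 0..s, g τ
  have hG : ∀ r, HasDerivAt G (g r) r := fun r => (hg.integral_hasStrictDerivAt 0 r).hasDerivAt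
  -- the flow says that `∇Ψ ∘ β + 2c A†G` has zero right derivative on `[0, ∞)`
  have hmirror : ∀ u ∈ Ici (0 : ℝ), ∀ s ∈ Ici (0 : ℝ), u ≤ s →
      ∇ Ψ (β s) - ∇ Ψ (β u) = -((2 * c) • (A†) (G s - G u)) := by
    intro u hu s hs hus
    set M : ℝ → E := fun τ => ∇ Ψ (β τ) + (2 * c) • (A†) (G τ)
    have hM : ∀ τ ∈ Ici (0 : ℝ), HasDerivWithinAt M 0 (Ici 0) τ := by
      intro τ hτ
      have := (hflow τ hτ).add
        (((A†).hasFDerivAt.comp_hasDerivAt τ (hG τ)).hasDerivWithinAt.const_smul (2 * c))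
      rw [hgβ τ hτ, neg_add_cancel] at this
      exact this
    have hIcc : Icc u s ⊆ Ici 0 := Icc_subset_Ici_iff hus |>.2 hu
    have := constant_of_has_deriv_right_zero
      (fun τ hτ => (hM τ (hIcc hτ)).continuousWithinAt.mono hIcc)
      (fun τ hτ => (hM τ (hIcc (Ico_subset_Icc_self hτ))).mono
        (Ici_subset_Ici.2 (hu.trans hτ.1))) s (right_mem_Icc.2 hus)
    simp only [M] at this
    rw [map_sub, smul_sub]
    linear_combination (norm := module) this
  refine (antitoneOn_norm_of_inner_sub_nonpos hG fun u hu s hs hus => ?_).congr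
    fun s hs => by simp only [hgβ s hs]
  have hgrad := hconv.inner_gradient_sub_nonneg hΨ (β u) (β s)
  rw [hmirror u hu s hs hus, inner_neg_left, real_inner_smul_left,
    ContinuousLinearMap.adjoint_inner_left] at hgrad
  rw [hgβ s hs, hgβ u hu, sub_sub_sub_cancel_right, ← map_sub]
  nlinarith

theorem mul_norm_residual_sq_le_bregmanDiv_div (hc : 0 < c) (hconv : ConvexOn ℝ univ Ψ)
    (hΨ : Differentiable ℝ Ψ) (hβ : ContinuousOn β (Ici 0))
    (hflow : IsMirrorFlow Ψ (fun x => (2 * c) • (A†) (A x - y)) β)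
    {b : E} (hb : A b = y) {t : ℝ} (ht : 0 < t) :
    c * ‖A (β t) - y‖ ^ 2 ≤ bregmanDiv Ψ b (β 0) / t := by
  have hanti := antitoneOn_norm_residual_of_mirrorFlow hc hconv hΨ hβ hflow
  have hmean : t * (2 * c * ‖A (β t) - y‖ ^ 2) ≤ ∫ s in 0..t, 2 * c * ‖A (β s) - y‖ ^ 2 :=
    calc t * (2 * c * ‖A (β t) - y‖ ^ 2)
      _ = ∫ _ in 0..t, 2 * c * ‖A (β t) - y‖ ^ 2 := by
        simp only [intervalIntegral.integral_const, sub_zero, smul_eq_mul]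
      _ ≤ ∫ s in 0..t, 2 * c * ‖A (β s) - y‖ ^ 2 :=
        intervalIntegral.integral_mono_on ht.le intervalIntegrable_const
          (intervalIntegrable_mul_norm_residual_sq _ hβ ht.le) fun s hs => by
            gcongr
            exact hanti hs.1 ht.le hs.2
  have henergy := integral_mul_norm_residual_sq_eq_of_mirrorFlow hconv hΨ hβ hflow hb ht.le
  have hDt := bregmanDiv_nonneg hconv (hΨ (β t)) b
  have hres : 0 ≤ t * (c * ‖A (β t) - y‖ ^ 2) := by positivity
  rw [le_div_iff₀ ht]
  linarith

end LeastSquares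

theorem stmt_13 {n d : ℕ} (hn : 0 < n) (X : Matrix (Fin n) (Fin d) ℝ) (y : Fin n → ℝ)
    (βs : EuclideanSpace ℝ (Fin d)) (hβs : X.mulVec βs = y)
    (L : EuclideanSpace ℝ (Fin d) → ℝ)
    (hLdef : ∀ b, L b = (1 / (4 * (n : ℝ))) * ∑ i, (X.mulVec b i - y i) ^ 2)
    (Ψ : EuclideanSpace ℝ (Fin d) → ℝ) (hΨ : ContDiff ℝ 2 Ψ)
    (hconv : ConvexOn ℝ Set.univ Ψ)
    (β : ℝ → EuclideanSpace ℝ (Fin d)) (β₀ : EuclideanSpace ℝ (Fin d))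
    (hβ0 : β 0 = β₀) (hcont : ContinuousOn β (Set.Ici 0))
    (hflow : ∀ t ∈ Set.Ici (0 : ℝ),
      HasDerivWithinAt (fun s => gradient Ψ (β s)) (-(gradient L (β t))) (Set.Ici 0) t) :
    ∀ t : ℝ, 0 < t →
      L (β t) ≤ (Ψ βs - Ψ β₀ - (inner ℝ (gradient Ψ β₀) (βs - β₀) : ℝ)) / t := by
  intro t ht
  set A := (Matrix.toEuclideanLin X).toContinuousLinearMap
  set c : ℝ := 1 / (4 * n)
  have hL : L = fun b => c * ‖A b - WithLp.toLp 2 y‖ ^ 2 := funext fun b => by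
    rw [hLdef, EuclideanSpace.norm_sq_eq]
    simp [A]
  have hgradL : ∀ b, ∇ L b = (2 * c) • (A†) (A b - WithLp.toLp 2 y) := fun b =>
    hL ▸ (hasGradientAt_mul_norm_sub_sq A _ c b).gradient
  have hb : A βs = WithLp.toLp 2 y := by
    rw [← hβs]
    rfl
  have hbound := mul_norm_residual_sq_le_bregmanDiv_div (by positivity) hconv
    (hΨ.differentiable (by norm_num)) hcont (fun s hs => hgradL (β s) ▸ hflow s hs) hb ht
  rwa [hL, ← hβ0]
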